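/- Let a and b be real numbers and for integers n ≥ 3 define v_n(a,b) = (∑_{k=1}^{n−2} 1/k) + (a·n+b)/(n(n−1)) − ln n. If a ≠ 3/2, then lim_{n→∞} n·(v_n(a,b) − γ) = a − 3/2, which is nonzero; in particular (v_n(a,b))_{n≥3} converges to γ with rate of convergence exactly n^{−1}. -/

import Mathlib

/-! Because the partial sum stops at `n - 2`,
`v a b n = H_n - log n + ((a - 2) n + (b + 1)) / (n (n - 1))`, and `n` times the correction tends
to `a - 2`. The rest is `n (H_n - log n - γ) → 1/2`, squeezed from
`1 / (2 (n + 1)) ≤ H_n - log n - γ ≤ 1 / (2 n)`: the sequences `H_n - log n - 1 / (2 n)` and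
`H_n - log n - 1 / (2 (n + 1))` are monotone with limit `γ`, by the two-sided bound
`2 / (2 x + 1) ≤ log (1 + 1 / x) ≤ (1 / x + 1 / (x + 1)) / 2`; its upper half is `t ≤ sinh t`
at `t = log (1 + 1 / x)`. -/

open Filter Topology Real

noncomputable def v (a b : ℝ) (n : ℕ) : ℝ :=
  (∑ k ∈ Finset.Icc 1 (n - 2), (1 : ℝ) / k) + (a * n + b) / ((n : ℝ) * ((n : ℝ) - 1))
    - Real.log n

namespace Real

lemma log_le_half_sub_inv {y : ℝ} (hy : 1 ≤ y) : log y ≤ (y - y⁻¹) / 2 := by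
  rw [← sinh_log (by positivity)]
  exact self_le_sinh_iff.2 (log_nonneg hy)

lemma log_add_one_sub_log_le {x : ℝ} (hx : 0 < x) :
    log (x + 1) - log x ≤ (x⁻¹ + (x + 1)⁻¹) / 2 := by
  rw [← log_div (by positivity) hx.ne']
  calc log ((x + 1) / x) ≤ ((x + 1) / x - ((x + 1) / x)⁻¹) / 2 :=
        log_le_half_sub_inv ((one_le_div hx).2 (by linarith))
    _ = (x⁻¹ + (x + 1)⁻¹) / 2 := by field_simp; ring

lemma two_div_two_mul_add_one_le_log_add_one_sub_log {x : ℝ} (hx : 0 < x) :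
    2 / (2 * x + 1) ≤ log (x + 1) - log x := by
  rw [← log_div (by positivity) hx.ne']
  calc 2 / (2 * x + 1) = 2 * x⁻¹ / (x⁻¹ + 2) := by field_simp; ring
    _ ≤ log (1 + x⁻¹) := le_log_one_add_of_nonneg (by positivity)
    _ = log ((x + 1) / x) := by congr 1; field_simp

end Real

lemma harmonic_succ_sub_log (n : ℕ) :
    (harmonic (n + 1) : ℝ) - log (n + 1 : ℕ) =
      harmonic n - log n + ((n : ℝ) + 1)⁻¹ - (log ((n : ℝ) + 1) - log n) := by
  rw [harmonic_succ]
  push_cast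
  ring

lemma tendsto_harmonic_succ_sub_log_succ :
    Tendsto (fun n : ℕ => (harmonic (n + 1) : ℝ) - log (n + 1 : ℕ)) atTop
      (𝓝 eulerMascheroniConstant) :=
  (tendsto_add_atTop_iff_nat 1).2 tendsto_harmonic_sub_log

lemma harmonic_sub_log_sub_eulerMascheroniConstant_le {n : ℕ} (hn : n ≠ 0) :
    harmonic n - log n - eulerMascheroniConstant ≤ (n : ℝ)⁻¹ / 2 := by
  set u : ℕ → ℝ := fun k => harmonic (k + 1) - log (k + 1 : ℕ) - ((k : ℝ) + 1)⁻¹ / 2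
  have hu : Monotone u := monotone_nat_of_le_succ fun k => by
    have := log_add_one_sub_log_le (x := (k : ℝ) + 1) (by positivity)
    simp only [u, harmonic_succ_sub_log (k + 1)]
    push_cast
    linarith
  have hlim : Tendsto u atTop (𝓝 eulerMascheroniConstant) := by
    simpa only [one_div, zero_div, sub_zero] using tendsto_harmonic_succ_sub_log_succ.sub
      ((tendsto_one_div_add_atTop_nhds_zero_nat (𝕜 := ℝ)).div_const 2)
  obtain ⟨k, rfl⟩ := Nat.exists_eq_add_one_of_ne_zero hn
  have := hu.ge_of_tendsto hlim k
  simp only [u] at this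
  push_cast at this ⊢
  linarith

lemma inv_add_one_div_two_le_harmonic_sub_log_sub_eulerMascheroniConstant {n : ℕ} (hn : n ≠ 0) :
    ((n : ℝ) + 1)⁻¹ / 2 ≤ harmonic n - log n - eulerMascheroniConstant := by
  set w : ℕ → ℝ := fun k => harmonic (k + 1) - log (k + 1 : ℕ) - ((k : ℝ) + 2)⁻¹ / 2
  have hw : Antitone w := antitone_nat_of_succ_le fun k => by
    have hlog := two_div_two_mul_add_one_le_log_add_one_sub_log (x := (k : ℝ) + 1) (by positivity)
    have hcmp : ((k : ℝ) + 2)⁻¹ + ((k : ℝ) + 2)⁻¹ / 2 - ((k : ℝ) + 3)⁻¹ / 2 ≤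
        2 / (2 * ((k : ℝ) + 1) + 1) := by
      field_simp
      nlinarith
    simp only [w, harmonic_succ_sub_log (k + 1)]
    push_cast
    simp only [show (k : ℝ) + 1 + 1 = k + 2 by ring, show (k : ℝ) + 1 + 2 = k + 3 by ring]
      at hlog ⊢
    linarith
  have hlim : Tendsto w atTop (𝓝 eulerMascheroniConstant) := by
    have h := (tendsto_add_atTop_iff_nat 1).2 (tendsto_one_div_add_atTop_nhds_zero_nat (𝕜 := ℝ))
    push_cast at h
    simpa only [one_div, zero_div, sub_zero, add_assoc, one_add_one_eq_two] using
      tendsto_harmonic_succ_sub_log_succ.sub (h.div_const 2)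
  obtain ⟨k, rfl⟩ := Nat.exists_eq_add_one_of_ne_zero hn
  have := hw.le_of_tendsto hlim k
  simp only [w] at this
  push_cast at this ⊢
  rw [show (k : ℝ) + 1 + 1 = k + 2 by ring]
  linarith

lemma tendsto_mul_harmonic_sub_log_sub_eulerMascheroniConstant :
    Tendsto (fun n : ℕ => (n : ℝ) * (harmonic n - log n - eulerMascheroniConstant)) atTop
      (𝓝 (1 / 2)) := by
  have hlower : Tendsto (fun n : ℕ => (n : ℝ) / (n + 1) / 2) atTop (𝓝 (1 / 2)) :=
    (tendsto_natCast_div_add_atTop (1 : ℝ)).div_const 2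
  refine tendsto_of_tendsto_of_tendsto_of_le_of_le' hlower tendsto_const_nhds ?_ ?_ <;>
    filter_upwards [eventually_ne_atTop 0] with n hn
  · calc (n : ℝ) / (n + 1) / 2 = n * (((n : ℝ) + 1)⁻¹ / 2) := by ring
      _ ≤ _ := mul_le_mul_of_nonneg_left
          (inv_add_one_div_two_le_harmonic_sub_log_sub_eulerMascheroniConstant hn) n.cast_nonneg
  · calc _ ≤ (n : ℝ) * ((n : ℝ)⁻¹ / 2) := mul_le_mul_of_nonneg_left
          (harmonic_sub_log_sub_eulerMascheroniConstant_le hn) n.cast_nonneg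
      _ = 1 / 2 := by field_simp

lemma v_eq_harmonic_sub_log_add {a b : ℝ} {n : ℕ} (hn : 2 ≤ n) :
    v a b n = harmonic n - log n + ((a - 2) * n + (b + 1)) / (n * (n - 1)) := by
  obtain ⟨m, rfl⟩ := Nat.exists_eq_add_of_le' hn
  have hsum : ∑ k ∈ Finset.Icc 1 m, (1 : ℝ) / k = harmonic m := by
    simp [harmonic_eq_sum_Icc]
  rw [v, Nat.add_sub_cancel, hsum, harmonic_succ, harmonic_succ]
  push_cast
  rw [show (m : ℝ) + 2 - 1 = m + 1 by ring]
  field_simp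
  ring

theorem rate_one (a b : ℝ) (ha : a ≠ 3 / 2) :
    Tendsto (fun n : ℕ => (n : ℝ) * (v a b n - Real.eulerMascheroniConstant)) atTop
      (𝓝 (a - 3 / 2)) ∧ a - 3 / 2 ≠ 0 := by
  refine ⟨?_, sub_ne_zero.2 ha⟩
  have hcorr : Tendsto (fun n : ℕ => ((a - 2) * n + (b + 1)) / (n - 1)) atTop (𝓝 (a - 2)) := by
    simpa only [one_mul, div_one, neg_add_eq_sub, add_comm (b + 1)] using
      tendsto_add_mul_div_add_mul_atTop_nhds (b + 1) (-1) (a - 2) one_ne_zero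
  have hsum := tendsto_mul_harmonic_sub_log_sub_eulerMascheroniConstant.add hcorr
  rw [show (1 : ℝ) / 2 + (a - 2) = a - 3 / 2 by ring] at hsum
  refine hsum.congr' ?_
  filter_upwards [eventually_ge_atTop 2] with n hn
  have hn1 : (n : ℝ) - 1 ≠ 0 := sub_ne_zero.2 (by exact_mod_cast (by omega : n ≠ 1))
  have hn0 : (n : ℝ) ≠ 0 := by exact_mod_cast (by omega : n ≠ 0)
  rw [v_eq_harmonic_sub_log_add hn]
  field_simp
  ring
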